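/- arXiv:1805.04187 — 3 statements merged into one kernel-verified Lean document; each statement's English description precedes it below -/
import Mathlib

section
/- Let p be a continuous density with p >= a > 0 on its compact support, satisfying the standardness condition: mu(L_x ∩ B(x,t)) >= tau * mu(B(x,t)) for all x with min_j ||x - m_j|| > t and all 0 < t < epsilon_0, where L_x = {y : p(y) > p(x)} and m_1,...,m_k are the modes. Let X_1,...,X_n be i.i.d. from p and fix x at distance greater than psi_n from every mode, where psi_n -> 0 and n * a * tau * v_d * psi_n^d >= 3 log n. Then P(delta_n(x) > psi_n) <= n^{-3}, where delta_n(x) = min{||X_i - x|| : p(X_i) > p(x)}. -/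
open MeasureTheory Filter Metric

/-- Under the standardness condition away from the modes `m₁,…,m_k`, for a
point `x` farther than `ψₙ` from every mode, with `n a τ v_d ψₙ^d ≥ 3 log n`, the
probability that no one of the `n` i.i.d. sample points of higher density lies within
distance `ψₙ` of `x` (i.e. `δₙ(x) > ψₙ`) is at most `n⁻³`. -/
theorem stmt8 {d k : ℕ} (hd : 0 < d) (a τ ε₀ vd : ℝ) (ha : 0 < a)
    (hτ : τ ∈ Set.Ioo (0 : ℝ) 1) (hε₀ : 0 < ε₀)
    (hvd : vd = (volume (ball (0 : EuclideanSpace ℝ (Fin d)) 1)).toReal)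
    (C : Set (EuclideanSpace ℝ (Fin d))) (hC : IsCompact C)
    (p : EuclideanSpace ℝ (Fin d) → ℝ) (hp : Continuous p)
    (hpa : ∀ y ∈ C, a ≤ p y)
    (P : Measure (EuclideanSpace ℝ (Fin d))) [IsProbabilityMeasure P]
    (hPd : P = volume.withDensity (fun y => ENNReal.ofReal (p y)))
    (m : Fin k → EuclideanSpace ℝ (Fin d))
    (hstd : ∀ y : EuclideanSpace ℝ (Fin d), ∀ t : ℝ, 0 < t → t < ε₀ →
      (∀ j, t < dist y (m j)) →
      ENNReal.ofReal τ * volume (ball y t) ≤ volume ({z | p y < p z} ∩ ball y t))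
    (x : EuclideanSpace ℝ (Fin d)) (n : ℕ) (hn : 2 ≤ n)
    (ψ : ℝ) (hψ : 0 < ψ) (hψε : ψ < ε₀)
    (hxm : ∀ j, ψ < dist x (m j))
    (hballC : ball x ψ ⊆ C)
    (hψn : 3 * Real.log n ≤ n * a * τ * vd * ψ ^ d) :
    (Measure.pi fun _ : Fin n => P)
        {ω | ∀ i, ¬(dist (ω i) x ≤ ψ ∧ p x < p (ω i))}
      ≤ ENNReal.ofReal (1 / (n : ℝ) ^ 3) := by
  have hn0 : (0:ℝ) < n := by positivity
  haveI : Nontrivial (EuclideanSpace ℝ (Fin d)) :=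
    Module.nontrivial_of_finrank_pos (R := ℝ) (by simp [hd])
  set A : Set (EuclideanSpace ℝ (Fin d)) := {y | dist y x ≤ ψ ∧ p x < p y} with hA
  have hAmeas : MeasurableSet A := by
    have h1 : A = Metric.closedBall x ψ ∩ {y | p x < p y} := by
      ext y; simp [hA, Metric.mem_closedBall, and_comm]
    rw [h1]
    exact measurableSet_closedBall.inter (measurableSet_lt measurable_const hp.measurable)
  -- the set S
  set S : Set (EuclideanSpace ℝ (Fin d)) := {z | p x < p z} ∩ ball x ψ with hS
  have hSmeas : MeasurableSet S :=
    (measurableSet_lt measurable_const hp.measurable).inter measurableSet_ball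
  have hSA : S ⊆ A := by
    intro z hz
    exact ⟨le_of_lt hz.2, hz.1⟩
  set r : ℝ := a * τ * vd * ψ ^ d with hr
  have hvd0 : 0 < vd := by
    rw [hvd]
    refine ENNReal.toReal_pos ?_ (measure_ball_lt_top.ne)
    exact (Metric.measure_ball_pos _ _ one_pos).ne'
  have hr0 : 0 < r := by
    rw [hr]; exact mul_pos (mul_pos (mul_pos ha hτ.1) hvd0) (pow_pos hψ d)
  -- volume of ball
  have hball : volume (ball x ψ) = ENNReal.ofReal (ψ ^ d * vd) := by
    rw [Measure.addHaar_ball volume x hψ.le, ENNReal.ofReal_mul (by positivity), hvd,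
      ENNReal.ofReal_toReal measure_ball_lt_top.ne]
    congr 2
    simp
  -- lower bound on P A
  have hPA : ENNReal.ofReal r ≤ P A := by
    have h1 : ENNReal.ofReal τ * volume (ball x ψ) ≤ volume S :=
      hstd x ψ hψ hψε hxm
    have h2 : ENNReal.ofReal a * volume S ≤ P S := by
      rw [hPd, withDensity_apply _ hSmeas]
      calc ENNReal.ofReal a * volume S = ∫⁻ y in S, ENNReal.ofReal a := by
            rw [setLIntegral_const, mul_comm]
        _ ≤ ∫⁻ y in S, ENNReal.ofReal (p y) := by
            refine setLIntegral_mono (hp.measurable.ennreal_ofReal) ?_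
            intro y hy
            exact ENNReal.ofReal_le_ofReal (hpa y (hballC hy.2))
    have hre : r = a * (τ * (ψ ^ d * vd)) := by rw [hr]; ring
    calc ENNReal.ofReal r = ENNReal.ofReal a * (ENNReal.ofReal τ * ENNReal.ofReal (ψ ^ d * vd)) := by
          rw [hre, ENNReal.ofReal_mul ha.le, ENNReal.ofReal_mul hτ.1.le]
      _ = ENNReal.ofReal a * (ENNReal.ofReal τ * volume (ball x ψ)) := by rw [hball]
      _ ≤ ENNReal.ofReal a * volume S := by
          exact mul_le_mul_right h1 _
      _ ≤ P S := h2
      _ ≤ P A := measure_mono hSA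
  -- event as pi set
  have hevent : {ω : Fin n → EuclideanSpace ℝ (Fin d) | ∀ i, ¬(dist (ω i) x ≤ ψ ∧ p x < p (ω i))}
      = Set.pi Set.univ (fun _ : Fin n => Aᶜ) := by
    ext ω
    simp [hA, Set.mem_pi]
  rw [hevent, Measure.pi_pi]
  have hcompl : P Aᶜ ≤ ENNReal.ofReal (1 - r) := by
    rw [prob_compl_eq_one_sub hAmeas]
    rw [show ENNReal.ofReal (1 - r) = 1 - ENNReal.ofReal r by
      rw [ENNReal.ofReal_sub _ hr0.le, ENNReal.ofReal_one]]
    exact tsub_le_tsub_left hPA 1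
  calc ∏ _i : Fin n, P Aᶜ ≤ ∏ _i : Fin n, ENNReal.ofReal (1 - r) :=
        Finset.prod_le_prod' fun _ _ => hcompl
    _ = ENNReal.ofReal (1 - r) ^ n := by rw [Finset.prod_const]; simp
    _ ≤ ENNReal.ofReal (Real.exp (-r)) ^ n := by
        gcongr
        have h := Real.add_one_le_exp (-r)
        linarith
    _ = ENNReal.ofReal (Real.exp (-r) ^ n) := by
        rw [← ENNReal.ofReal_pow (Real.exp_nonneg _)]
    _ ≤ ENNReal.ofReal (1 / (n : ℝ) ^ 3) := by
        apply ENNReal.ofReal_le_ofReal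
        rw [← Real.exp_nat_mul]
        have h3 : (n:ℝ) * (-r) ≤ -(3 * Real.log n) := by
          have : 3 * Real.log n ≤ n * r := by
            calc 3 * Real.log n ≤ n * a * τ * vd * ψ ^ d := hψn
              _ = n * r := by ring
          linarith
        calc Real.exp ((n:ℝ) * (-r)) ≤ Real.exp (-(3 * Real.log n)) := Real.exp_le_exp.mpr h3
          _ = 1 / (n:ℝ) ^ 3 := by
            rw [Real.exp_neg, show (3:ℝ) * Real.log n = ((3:ℕ):ℝ) * Real.log n by norm_num,
              Real.exp_nat_mul, Real.exp_log hn0]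
            simp
end

section
/- Let p: R^d -> R be C^3 and s a critical point of p (gradient zero) whose Hessian H(s) has a positive eigenvalue lambda > 0 with unit eigenvector v. Then for all sufficiently small epsilon > 0 and any x with ||x - s|| <= epsilon, the point y = x + c*epsilon*v satisfies p(y) >= p(x) + (c^2 epsilon^2 lambda)/8, provided c > 0 is a sufficiently large constant depending only on lambda, the operator norm of H(s), and the bounds on the second and third derivatives of p. -/
/-!
As `∇p` is differentiable at the critical point `s`, with derivative the Hessian `H`, we have
`∇p z = H (z - s) + o(‖z - s‖)`. Integrating `⟪∇p, u⟫` along the segment from `x` to `x + u`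
gives `p (x + u) - p x ≥ ⟪H (x - s), u⟫ + ⟪H u, u⟫ / 2 - o(ε) ‖u‖` when `‖x - s‖ ≤ ε`.
For `u = c ε v` the curvature term is `λ c² ε² / 2`, the cross term costs at most
`‖H‖ c ε² ≤ λ c² ε² / 4` once `c ≥ 4 ‖H‖ / λ`, and the error is at most `λ c² ε² / 8` for small `ε`.
-/

open Metric Set InnerProductSpace

theorem add_add_half_le_of_affine_le_deriv {φ φ' : ℝ → ℝ} {a b : ℝ}
    (hφ : ∀ t ∈ Icc (0 : ℝ) 1, HasDerivAt φ (φ' t) t)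
    (hle : ∀ t ∈ Icc (0 : ℝ) 1, a + b * t ≤ φ' t) :
    φ 0 + a + b / 2 ≤ φ 1 := by
  let ψ : ℝ → ℝ := fun t => φ t - a * t - b / 2 * t ^ 2
  have hψ : ∀ t ∈ Icc (0 : ℝ) 1, HasDerivAt ψ (φ' t - a - b * t) t := fun t ht => by
    refine (((hφ t ht).fun_sub ((hasDerivAt_id' t).const_mul a)).fun_sub
      ((hasDerivAt_pow 2 t).const_mul (b / 2))).congr_deriv ?_
    norm_num
    ring
  have hmono : MonotoneOn ψ (Icc 0 1) :=
    monotoneOn_of_hasDerivWithinAt_nonneg (convex_Icc 0 1)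
      (fun t ht => (hψ t ht).continuousAt.continuousWithinAt)
      (fun t ht => (hψ t (interior_subset ht)).hasDerivWithinAt)
      (fun t ht => by linarith [hle t (interior_subset ht)])
  have h01 := hmono (left_mem_Icc.2 zero_le_one) (right_mem_Icc.2 zero_le_one) zero_le_one
  simp only [ψ] at h01
  linarith

theorem HasFDerivAt.exists_closedBall_norm_sub_le {E F : Type*} [NormedAddCommGroup E]
    [NormedSpace ℝ E] [NormedAddCommGroup F] [NormedSpace ℝ F] {f : E → F} {f' : E →L[ℝ] F}
    {s : E} (hf : HasFDerivAt f f' s) {δ : ℝ} (hδ : 0 < δ) :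
    ∃ r > 0, ∀ z ∈ closedBall s r, ‖f z - f s - f' (z - s)‖ ≤ δ * ‖z - s‖ :=
  nhds_basis_closedBall.eventually_iff.1 (hf.isLittleO.def hδ)

section Gradient

variable {E : Type*} [NormedAddCommGroup E] [InnerProductSpace ℝ E] [CompleteSpace E]
  {p : E → ℝ}

theorem ContDiff.gradient {m n : WithTop ℕ∞} (hp : ContDiff ℝ n p) (hmn : m + 1 ≤ n) :
    ContDiff ℝ m (gradient p) :=
  (toDual ℝ E).symm.contDiff.comp (hp.fderiv_right hmn)

theorem le_apply_add_of_norm_gradient_sub_le {H : E →L[ℝ] E} {s x u : E} {δ R : ℝ}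
    (hp : Differentiable ℝ p) (hδ : 0 ≤ δ)
    (happrox : ∀ z ∈ closedBall s R, ‖gradient p z - H (z - s)‖ ≤ δ * ‖z - s‖)
    (hxu : ‖x - s‖ + ‖u‖ ≤ R) :
    p x + ⟪H (x - s), u⟫_ℝ + ⟪H u, u⟫_ℝ / 2 - δ * R * ‖u‖ ≤ p (x + u) := by
  have hline : ∀ t : ℝ, HasDerivAt (fun t : ℝ => p (x + t • u)) (fderiv ℝ p (x + t • u) u) t :=
    fun t => (hp _).hasFDerivAt.comp_hasDerivAt t
      (by simpa using ((hasDerivAt_id t).smul_const u).const_add x)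
  have hderiv : ∀ t ∈ Icc (0 : ℝ) 1,
      ⟪H (x - s), u⟫_ℝ - δ * R * ‖u‖ + ⟪H u, u⟫_ℝ * t ≤ fderiv ℝ p (x + t • u) u := by
    rintro t ⟨ht0, ht1⟩
    have hzs : x + t • u - s = (x - s) + t • u := by abel
    have hdist : ‖x + t • u - s‖ ≤ R := by
      rw [hzs]
      calc ‖(x - s) + t • u‖ ≤ ‖x - s‖ + t * ‖u‖ := by
            simpa [norm_smul, abs_of_nonneg ht0] using norm_add_le (x - s) (t • u)
        _ ≤ R := by nlinarith [norm_nonneg u]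
    have herr := happrox _ (mem_closedBall_iff_norm.2 hdist)
    have hinner : |⟪gradient p (x + t • u) - H (x + t • u - s), u⟫_ℝ| ≤ δ * R * ‖u‖ :=
      (abs_real_inner_le_norm _ _).trans (mul_le_mul_of_nonneg_right
        (herr.trans (mul_le_mul_of_nonneg_left hdist hδ)) (norm_nonneg u))
    have hsplit : fderiv ℝ p (x + t • u) u = ⟪H (x - s), u⟫_ℝ + ⟪H u, u⟫_ℝ * t
        + ⟪gradient p (x + t • u) - H (x + t • u - s), u⟫_ℝ := by
      rw [← inner_gradient_left, inner_sub_left, hzs, map_add, map_smul, inner_add_left,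
        real_inner_smul_left]
      ring
    linarith [neg_abs_le ⟪gradient p (x + t • u) - H (x + t • u - s), u⟫_ℝ]
  have := add_add_half_le_of_affine_le_deriv (fun t _ => hline t) hderiv
  simp only [zero_smul, add_zero, one_smul] at this
  linarith

theorem add_sq_mul_le_apply_add_smul_of_eigenvector {H : E →L[ℝ] E} {s x v : E}
    {lam c ε : ℝ} (hp : Differentiable ℝ p) (hlam : 0 < lam) (hc : 0 < c) (hε : 0 < ε)
    (hHc : ‖H‖ ≤ lam * c / 4) (hv : ‖v‖ = 1) (heig : ∀ w, ⟪H v, w⟫_ℝ = lam * ⟪v, w⟫_ℝ)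
    (happrox : ∀ z ∈ closedBall s ((1 + c) * ε),
      ‖gradient p z - H (z - s)‖ ≤ lam * c / (8 * (1 + c)) * ‖z - s‖)
    (hx : ‖x - s‖ ≤ ε) :
    p x + c ^ 2 * ε ^ 2 * lam / 8 ≤ p (x + (c * ε) • v) := by
  set u := (c * ε) • v
  have hu : ‖u‖ = c * ε := by rw [norm_smul, hv, mul_one, Real.norm_of_nonneg (by positivity)]
  have key := le_apply_add_of_norm_gradient_sub_le hp (by positivity) happrox
    (by rw [hu]; linarith)
  have hcross : -(‖H‖ * ε * (c * ε)) ≤ ⟪H (x - s), u⟫_ℝ := by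
    refine neg_le_of_abs_le ((abs_real_inner_le_norm _ _).trans ?_)
    rw [hu]
    gcongr
    exact (H.le_opNorm _).trans (by gcongr)
  have hcurv : ⟪H u, u⟫_ℝ = lam * (c * ε) ^ 2 := by
    rw [map_smul, real_inner_smul_left, heig, real_inner_smul_right, real_inner_self_eq_norm_sq, hv]
    ring
  have herr : lam * c / (8 * (1 + c)) * ((1 + c) * ε) * ‖u‖ = lam * (c * ε) ^ 2 / 8 := by
    rw [hu]
    field_simp
  have hHcε : ‖H‖ * ε * (c * ε) ≤ lam * (c * ε) ^ 2 / 4 := by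
    calc ‖H‖ * ε * (c * ε) ≤ lam * c / 4 * ε * (c * ε) := by gcongr
      _ = lam * (c * ε) ^ 2 / 4 := by ring
  rw [hcurv, herr] at key
  linarith

end Gradient

theorem stmt10_general {d : ℕ} (p : EuclideanSpace ℝ (Fin d) → ℝ) (hp : ContDiff ℝ 3 p)
    (s : EuclideanSpace ℝ (Fin d)) (hcrit : gradient p s = 0)
    (lam : ℝ) (hlam : 0 < lam) (v : EuclideanSpace ℝ (Fin d)) (hv : ‖v‖ = 1)
    (heig : ∀ w : EuclideanSpace ℝ (Fin d),
      (inner ℝ (fderiv ℝ (gradient p) s v) w : ℝ) = lam * (inner ℝ v w : ℝ)) :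
    ∃ c₀ > (0 : ℝ), ∀ c : ℝ, c₀ ≤ c → ∃ ε₁ > (0 : ℝ), ∀ ε : ℝ, 0 < ε → ε ≤ ε₁ →
      ∀ x : EuclideanSpace ℝ (Fin d), ‖x - s‖ ≤ ε →
        p x + c ^ 2 * ε ^ 2 * lam / 8 ≤ p (x + (c * ε) • v) := by
  set H := fderiv ℝ (gradient p) s
  have hH : HasFDerivAt (gradient p) H s :=
    ((hp.gradient (m := 2) (by norm_num)).differentiable (by norm_num) s).hasFDerivAt
  refine ⟨4 * ‖H‖ / lam + 1, by positivity, fun c hc => ?_⟩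
  have hc0 : 0 < c := by linarith [show 0 ≤ 4 * ‖H‖ / lam by positivity]
  have hHc : ‖H‖ ≤ lam * c / 4 := by
    have := (div_le_iff₀ hlam).1 (by linarith : 4 * ‖H‖ / lam ≤ c)
    linarith
  obtain ⟨r, hr, happrox⟩ :=
    hH.exists_closedBall_norm_sub_le (δ := lam * c / (8 * (1 + c))) (by positivity)
  refine ⟨r / (1 + c), by positivity, fun ε hε hεr x hx => ?_⟩
  have hR : (1 + c) * ε ≤ r := by rwa [le_div_iff₀ (by positivity), mul_comm] at hεr
  refine add_sq_mul_le_apply_add_smul_of_eigenvector (hp.differentiable (by norm_num)) hlam hc0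
    hε hHc hv heig (fun z hz => ?_) hx
  simpa only [hcrit, sub_zero] using happrox z (closedBall_subset_closedBall hR hz)

/-- Escaping a saddle.  If `s` is a critical point of a `C³` function `p`
with bounded derivatives whose Hessian has a positive eigenvalue `lam` with unit
eigenvector `v`, then for any sufficiently large constant `c` (depending only on `lam`,
`‖H(s)‖` and the derivative bounds) and all sufficiently small `ε > 0`: for every `x` with
`‖x - s‖ ≤ ε`, the point `y = x + c ε v` satisfies `p(y) ≥ p(x) + c² ε² lam / 8`. -/
theorem stmt10 {d : ℕ} (p : EuclideanSpace ℝ (Fin d) → ℝ) (hp : ContDiff ℝ 3 p)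
    (A₂ A₃ : ℝ)
    (hA₂ : ∀ x, ‖iteratedFDeriv ℝ 2 p x‖ ≤ A₂)
    (hA₃ : ∀ x, ‖iteratedFDeriv ℝ 3 p x‖ ≤ A₃)
    (s : EuclideanSpace ℝ (Fin d)) (hcrit : gradient p s = 0)
    (lam : ℝ) (hlam : 0 < lam) (v : EuclideanSpace ℝ (Fin d)) (hv : ‖v‖ = 1)
    (heig : ∀ w : EuclideanSpace ℝ (Fin d),
      (inner ℝ (fderiv ℝ (gradient p) s v) w : ℝ) = lam * (inner ℝ v w : ℝ)) :
    ∃ c₀ > (0 : ℝ), ∀ c : ℝ, c₀ ≤ c → ∃ ε₁ > (0 : ℝ), ∀ ε : ℝ, 0 < ε → ε ≤ ε₁ →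
      ∀ x : EuclideanSpace ℝ (Fin d), ‖x - s‖ ≤ ε →
        p x + c ^ 2 * ε ^ 2 * lam / 8 ≤ p (x + (c * ε) • v) :=
  stmt10_general p hp s hcrit lam hlam v hv heig
end

section
/- Let p be a C^3 Morse function on a compact set with finitely many critical points, modes m_1,...,m_k, and other critical points s_1,...,s_N. For any c_1 > 0 and u_n = c_1 epsilon_n / 2 -> 0, there exists q > 0 such that for all sufficiently large n, every x outside the union of the balls B(m_j, c_1 epsilon_n) and B(s_j, u_n) satisfies ||g(x)|| > c_1 epsilon_n q / 4, where g is the gradient of p. -/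
open Metric Filter

section Aux

lemma aux_exists_pos_le {ι : Type*} [Fintype ι] (f : ι → ℝ) (hf : ∀ i, 0 < f i) :
    ∃ Q > (0 : ℝ), ∀ i, Q ≤ f i := by
  rcases isEmpty_or_nonempty ι with h | h
  · exact ⟨1, one_pos, fun i => (IsEmpty.false i).elim⟩
  · obtain ⟨i₀, -, hi₀⟩ := Finset.exists_min_image Finset.univ f ⟨Classical.arbitrary ι,
      Finset.mem_univ _⟩
    exact ⟨f i₀, hf i₀, fun i => hi₀ i (Finset.mem_univ i)⟩

lemma aux_compact_pos {E : Type*} [MetricSpace E] {K : Set E} (hK : IsCompact K)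
    {f : E → ℝ} (hf : Continuous f) (hpos : ∀ x ∈ K, 0 < f x) :
    ∃ δ > (0 : ℝ), ∀ x ∈ K, δ ≤ f x := by
  rcases K.eq_empty_or_nonempty with h | h
  · exact ⟨1, one_pos, by simp [h]⟩
  · obtain ⟨x₀, hx₀, hmin⟩ := hK.exists_isMinOn h hf.continuousOn
    exact ⟨f x₀, hpos x₀ hx₀, fun x hx => hmin hx⟩

end Aux

/-- Gradient lower bound away from critical points.  For a `C³` Morse
function `p` on a compact set `C` whose critical points in `C` are exactly the modes
`m₁,…,m_k` and the remaining critical points `s₁,…,s_N`, and for any `c₁ > 0`, with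
`uₙ = c₁ εₙ / 2`, there exists `q > 0` such that for all large `n`, every `x ∈ C` outside
`⋃ⱼ B(mⱼ, c₁ εₙ)` and `⋃ⱼ B(sⱼ, uₙ)` satisfies `‖g(x)‖ > c₁ εₙ q / 4`. -/
theorem stmt12 {d k N : ℕ} (p : EuclideanSpace ℝ (Fin d) → ℝ) (hp : ContDiff ℝ 3 p)
    (C : Set (EuclideanSpace ℝ (Fin d))) (hC : IsCompact C)
    (m : Fin k → EuclideanSpace ℝ (Fin d)) (s : Fin N → EuclideanSpace ℝ (Fin d))
    (hmC : ∀ j, m j ∈ C) (hsC : ∀ j, s j ∈ C)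
    (hcrit : ∀ x ∈ C, (gradient p x = 0 ↔ (∃ j, x = m j) ∨ ∃ j, x = s j))
    (hmorse : ∀ x ∈ C, gradient p x = 0 →
      Function.Injective (fderiv ℝ (gradient p) x))
    (ε : ℕ → ℝ) (hεpos : ∀ n, 0 < ε n) (hεlim : Tendsto ε atTop (nhds 0))
    (c₁ : ℝ) (hc₁ : 0 < c₁) :
    ∃ q > (0 : ℝ), ∀ᶠ n : ℕ in atTop,
      ∀ x ∈ C, (∀ j, x ∉ ball (m j) (c₁ * ε n)) →
        (∀ j, x ∉ ball (s j) (c₁ * ε n / 2)) →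
        c₁ * ε n * q / 4 < ‖gradient p x‖ := by
  classical
  -- the gradient is C², in particular differentiable and continuous
  have hg2 : ContDiff ℝ 2 (gradient p) := by
    have h1 : ContDiff ℝ 2 (fderiv ℝ p) := hp.fderiv_right (by norm_num)
    have h2 : ContDiff ℝ 2 (fun y : EuclideanSpace ℝ (Fin d) →L[ℝ] ℝ =>
        (InnerProductSpace.toDual ℝ (EuclideanSpace ℝ (Fin d))).symm y) :=
      (InnerProductSpace.toDual ℝ (EuclideanSpace ℝ (Fin d))).symm.contDiff
    exact h2.comp h1
  have hgdiff : Differentiable ℝ (gradient p) :=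
    hg2.differentiable (by norm_num)
  have hgcont : Continuous (gradient p) := hgdiff.continuous
  -- the critical points, indexed by `Fin k ⊕ Fin N`
  set c : Fin k ⊕ Fin N → EuclideanSpace ℝ (Fin d) := Sum.elim m s with hc
  have hcC : ∀ i, c i ∈ C := by rintro (j | j) <;> [exact hmC j; exact hsC j]
  have hczero : ∀ i, gradient p (c i) = 0 := by
    rintro (j | j)
    · exact (hcrit (m j) (hmC j)).2 (Or.inl ⟨j, rfl⟩)
    · exact (hcrit (s j) (hsC j)).2 (Or.inr ⟨j, rfl⟩)
  -- local lower bound near each critical point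
  have hloc : ∀ i, ∃ q > (0 : ℝ), ∃ r > (0 : ℝ),
      ∀ x, dist x (c i) < r → q * dist x (c i) ≤ ‖gradient p x‖ := by
    intro i
    set A := fderiv ℝ (gradient p) (c i) with hA
    have hAinj : Function.Injective A := hmorse (c i) (hcC i) (hczero i)
    obtain ⟨K, hK, hKanti⟩ :=
      (A : EuclideanSpace ℝ (Fin d) →ₗ[ℝ] EuclideanSpace ℝ (Fin d)).exists_antilipschitzWith
        (LinearMap.ker_eq_bot.2 hAinj)
    set q₀ : ℝ := (K : ℝ)⁻¹ with hq₀
    have hq₀pos : 0 < q₀ := by positivity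
    have hAlow : ∀ v : EuclideanSpace ℝ (Fin d), q₀ * ‖v‖ ≤ ‖A v‖ := by
      intro v
      have := hKanti.le_mul_dist v 0
      simp only [dist_zero_right, map_zero, dist_eq_norm, sub_zero] at this
      rw [hq₀, inv_mul_le_iff₀ (by exact_mod_cast hK)]
      simpa [mul_comm] using this
    -- definition of the derivative with ε = q₀ / 2
    have hder : HasFDerivAt (gradient p) A (c i) := (hgdiff (c i)).hasFDerivAt
    have hlo := hder.isLittleO
    have hev : ∀ᶠ x in nhds (c i),
        ‖gradient p x - gradient p (c i) - A (x - c i)‖ ≤ q₀ / 2 * ‖x - c i‖ :=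
      hlo.def (by positivity)
    obtain ⟨r, hr, hballr⟩ := Metric.eventually_nhds_iff.1 hev
    refine ⟨q₀ / 2, by positivity, r, hr, fun x hx => ?_⟩
    have h1 := hballr hx
    rw [hczero i, sub_zero] at h1
    have h2 : q₀ * ‖x - c i‖ ≤ ‖A (x - c i)‖ := hAlow _
    have h3 : ‖A (x - c i)‖ ≤ ‖gradient p x‖ + ‖gradient p x - A (x - c i)‖ := by
      calc ‖A (x - c i)‖ = ‖gradient p x - (gradient p x - A (x - c i))‖ := by
            rw [sub_sub_cancel]
        _ ≤ ‖gradient p x‖ + ‖gradient p x - A (x - c i)‖ := norm_sub_le _ _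
    have hdn : dist x (c i) = ‖x - c i‖ := dist_eq_norm x (c i)
    rw [hdn]
    linarith
  choose q hq r hr hball using hloc
  obtain ⟨Q, hQ, hQle⟩ := aux_exists_pos_le q hq
  obtain ⟨R, hR, hRle⟩ := aux_exists_pos_le r hr
  -- the "far" compact set
  set K : Set (EuclideanSpace ℝ (Fin d)) := C ∩ {x | ∀ i, R ≤ dist x (c i)} with hKdef
  have hKcompact : IsCompact K := by
    have hcl : IsClosed {x : EuclideanSpace ℝ (Fin d) | ∀ i, R ≤ dist x (c i)} := by
      have : {x : EuclideanSpace ℝ (Fin d) | ∀ i, R ≤ dist x (c i)}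
          = ⋂ i, {x | R ≤ dist x (c i)} := by
        ext x; simp [Set.mem_iInter]
      rw [this]
      exact isClosed_iInter fun i =>
        isClosed_le continuous_const (continuous_id.dist continuous_const)
    exact hC.inter_right hcl
  have hKpos : ∀ x ∈ K, 0 < ‖gradient p x‖ := by
    rintro x ⟨hxC, hxfar⟩
    rw [norm_pos_iff]
    intro h0
    rcases (hcrit x hxC).1 h0 with ⟨j, hj⟩ | ⟨j, hj⟩
    · have h := hxfar (Sum.inl j)
      rw [hj] at h
      simp only [hc, Sum.elim_inl, dist_self] at h
      linarith
    · have h := hxfar (Sum.inr j)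
      rw [hj] at h
      simp only [hc, Sum.elim_inr, dist_self] at h
      linarith
  obtain ⟨δ, hδ, hδle⟩ := aux_compact_pos hKcompact hgcont.norm hKpos
  refine ⟨Q, hQ, ?_⟩
  have hev1 : ∀ᶠ n in atTop, c₁ * ε n < R := by
    have h : Tendsto (fun n => c₁ * ε n) atTop (nhds 0) := by
      simpa using hεlim.const_mul c₁
    exact h.eventually (eventually_lt_nhds hR)
  have hev2 : ∀ᶠ n in atTop, c₁ * ε n * Q / 4 < δ := by
    have h : Tendsto (fun n => c₁ * ε n * Q / 4) atTop (nhds 0) := by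
      simpa using ((hεlim.const_mul c₁).mul_const Q).div_const 4
    exact h.eventually (eventually_lt_nhds hδ)
  filter_upwards [hev1, hev2] with n hn1 hn2
  intro x hxC hxm hxs
  have hεn := hεpos n
  by_cases hfar : ∀ i, R ≤ dist x (c i)
  · -- far from all critical points
    have hδx : δ ≤ ‖gradient p x‖ := hδle x ⟨hxC, hfar⟩
    linarith
  · -- near some critical point
    push_neg at hfar
    obtain ⟨i, hi⟩ := hfar
    have hir : dist x (c i) < r i := lt_of_lt_of_le hi (hRle i)
    have hbound := hball i x hir
    have hdistlow : c₁ * ε n / 2 ≤ dist x (c i) := by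
      rcases i with j | j
      · have h := hxm j
        rw [mem_ball] at h
        push_neg at h
        show c₁ * ε n / 2 ≤ dist x (m j)
        nlinarith [mul_pos hc₁ hεn]
      · have h := hxs j
        rw [mem_ball] at h
        push_neg at h
        show c₁ * ε n / 2 ≤ dist x (s j)
        linarith
    have h1 : q i * (c₁ * ε n / 2) ≤ q i * dist x (c i) :=
      mul_le_mul_of_nonneg_left hdistlow (le_of_lt (hq i))
    have h2 : Q * (c₁ * ε n / 2) ≤ q i * (c₁ * ε n / 2) :=
      mul_le_mul_of_nonneg_right (hQle i) (by positivity)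
    have h3 : c₁ * ε n * Q / 4 < Q * (c₁ * ε n / 2) := by
      nlinarith [mul_pos (mul_pos hc₁ hεn) hQ]
    linarith
end
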